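/- Let Ĥ : Ω → ℂ^{K×N} be a random matrix, W ∈ ℝ^{K×K} a positive semidefinite diagonal matrix, Ψ : Ω → ℂ^{N×N} a random positive semidefinite Hermitian matrix, and P > 0. Define the random matrix M := W^{1/2}Ĥ (ĤᴴWĤ + Ψ + P^{-1}I)^{-1} ĤᴴW^{1/2} and Π := E[M] (entrywise expectation, well defined since 0 ≼ M ≼ I almost surely). Then Π is Hermitian with 0 ≼ Π and I − Π positive definite, i.e., the operator norm of Π is strictly less than 1. -/

import Mathlib

/-!
Pointwise, with `B = W^{1/2} Ĥ` and `S = Ψ + P⁻¹ I ≻ 0`, the random matrix is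
`M = B (Bᴴ B + S)⁻¹ Bᴴ`, so `M ≽ 0`, and the Woodbury identity gives
`I - M = (I + B S⁻¹ Bᴴ)⁻¹ ≻ 0`. From `0 ≼ M ≼ I` every entry of `M` has modulus at most `1`
(nonnegativity of the `2 × 2` principal minors), so `M` is integrable. Quadratic forms commute
with the entrywise expectation, so `E[M] ≽ 0` and `I - E[M] = E[I - M] ≻ 0`, strictness surviving
because an everywhere positive function has positive integral.
-/

open MeasureTheory Matrix
open scoped ComplexOrder ENNReal

noncomputable section

/-- Entrywise expectation of a random matrix. -/
def intMat {Ω a b : Type*} {m0 : MeasurableSpace Ω} (μ : Measure Ω)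
    (M : Ω → Matrix a b ℂ) : Matrix a b ℂ := Matrix.of fun i j => ∫ ω, M ω i j ∂μ

/-- `diag(w)` as a complex matrix. -/
def diagC {K : ℕ} (w : Fin K → ℝ) : Matrix (Fin K) (Fin K) ℂ :=
  Matrix.diagonal fun i => (w i : ℂ)

/-- `diag(w)^{1/2}` as a complex matrix. -/
def sqrtDiag {K : ℕ} (w : Fin K → ℝ) : Matrix (Fin K) (Fin K) ℂ :=
  Matrix.diagonal fun i => (Real.sqrt (w i) : ℂ)

/-- The random matrix `M = W^{1/2} Ĥ (Ĥᴴ W Ĥ + Ψ + P⁻¹ I)⁻¹ Ĥᴴ W^{1/2}`. -/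
def Mrand {Ω : Type*} {K N : ℕ} (w : Fin K → ℝ) (P : ℝ)
    (Hhat : Ω → Matrix (Fin K) (Fin N) ℂ) (Ψ : Ω → Matrix (Fin N) (Fin N) ℂ)
    (ω : Ω) : Matrix (Fin K) (Fin K) ℂ :=
  sqrtDiag w * Hhat ω * ((Hhat ω)ᴴ * diagC w * Hhat ω + Ψ ω + (P⁻¹ : ℂ) • 1)⁻¹
    * (Hhat ω)ᴴ * sqrtDiag w

namespace Matrix

section Woodbury
variable {m n α : Type*} [Fintype m] [Fintype n] [DecidableEq m] [DecidableEq n] [CommRing α]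

theorem one_sub_mul_inv_mul_eq_inv (U : Matrix m n α) (V : Matrix n m α) {S : Matrix n n α}
    (hS : IsUnit S) (hVUS : IsUnit (V * U + S)) :
    1 - U * (V * U + S)⁻¹ * V = (1 + U * S⁻¹ * V)⁻¹ := by
  have hSdet : IsUnit S.det := (isUnit_iff_isUnit_det S).mp hS
  have := add_mul_mul_inv_eq_sub 1 U S⁻¹ V isUnit_one (isUnit_nonsing_inv_iff.mpr hS)
    (by simpa [nonsing_inv_nonsing_inv S hSdet, add_comm] using hVUS)
  simp only [inv_one, Matrix.mul_one, Matrix.one_mul, nonsing_inv_nonsing_inv S hSdet] at this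
  rw [this, add_comm]

end Woodbury

section PosDef
variable {m n 𝕜 : Type*} [RCLike 𝕜]

theorem PosSemidef.apply_mul_apply_le {Q : Matrix n n 𝕜} (hQ : Q.PosSemidef) (i j : n) :
    Q i j * Q j i ≤ Q i i * Q j j := by
  have := (hQ.submatrix ![i, j]).det_nonneg
  rw [det_fin_two] at this
  simpa [sub_nonneg, mul_comm (Q j j)] using this

theorem PosSemidef.norm_apply_le_one [DecidableEq n] {Q : Matrix n n 𝕜} (hQ : Q.PosSemidef)
    (hQ1 : (1 - Q).PosSemidef) (i j : n) : ‖Q i j‖ ≤ 1 := by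
  have hdiag_le_one (k : n) : Q k k ≤ 1 := by simpa using hQ1.diag_nonneg (i := k)
  have hsq : (‖Q i j‖ : 𝕜) ^ 2 ≤ 1 := by
    rw [← RCLike.mul_conj, starRingEnd_apply, hQ.isHermitian.apply]
    exact (hQ.apply_mul_apply_le i j).trans
      (mul_le_one₀ (hdiag_le_one i) hQ.diag_nonneg (hdiag_le_one j))
  norm_cast at hsq
  exact (sq_le_one_iff₀ (norm_nonneg _)).mp hsq

variable [Fintype n] [DecidableEq n]

theorem posSemidef_mul_inv_mul_conjTranspose [Fintype m] (B : Matrix m n 𝕜)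
    {S : Matrix n n 𝕜} (hS : S.PosDef) : (B * (Bᴴ * B + S)⁻¹ * Bᴴ).PosSemidef :=
  (PosDef.posSemidef_add (posSemidef_conjTranspose_mul_self B) hS).inv.posSemidef
    |>.mul_mul_conjTranspose_same B

theorem posDef_one_sub_mul_inv_mul_conjTranspose [Fintype m] [DecidableEq m]
    (B : Matrix m n 𝕜) {S : Matrix n n 𝕜} (hS : S.PosDef) :
    (1 - B * (Bᴴ * B + S)⁻¹ * Bᴴ).PosDef := by
  rw [one_sub_mul_inv_mul_eq_inv B Bᴴ hS.isUnit
    (PosDef.posSemidef_add (posSemidef_conjTranspose_mul_self B) hS).isUnit]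
  exact (PosDef.one.add_posSemidef (hS.inv.posSemidef.mul_mul_conjTranspose_same B)).inv

end PosDef

section Measurable
variable {Ω l m n 𝕜 : Type*} [MeasurableSpace Ω] [RCLike 𝕜]

theorem measurable_mul_apply [Fintype m] {A : Ω → Matrix l m 𝕜} {B : Ω → Matrix m n 𝕜}
    (hA : ∀ i j, Measurable fun ω => A ω i j) (hB : ∀ i j, Measurable fun ω => B ω i j)
    (i : l) (j : n) : Measurable fun ω => (A ω * B ω) i j := by
  simp only [mul_apply]
  exact Finset.measurable_sum _ fun k _ => (hA i k).mul (hB k j)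

theorem measurable_conjTranspose_apply {A : Ω → Matrix m n 𝕜}
    (hA : ∀ i j, Measurable fun ω => A ω i j) (i : n) (j : m) :
    Measurable fun ω => (A ω)ᴴ i j := by
  simp only [conjTranspose_apply, ← starRingEnd_apply]
  exact RCLike.continuous_conj.measurable.comp (hA j i)

theorem measurable_det [Fintype n] [DecidableEq n] {A : Ω → Matrix n n 𝕜}
    (hA : ∀ i j, Measurable fun ω => A ω i j) : Measurable fun ω => (A ω).det := by
  simp only [det_apply']
  exact Finset.measurable_sum _ fun σ _ =>
    (Finset.measurable_prod _ fun i _ => hA _ _).const_mul _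

theorem measurable_inv_apply [Fintype n] [DecidableEq n] {A : Ω → Matrix n n 𝕜}
    (hA : ∀ i j, Measurable fun ω => A ω i j) (i j : n) :
    Measurable fun ω => (A ω)⁻¹ i j := by
  simp only [inv_def, smul_apply, Ring.inverse_eq_inv', adjugate_apply, smul_eq_mul]
  refine (measurable_det hA).inv.mul (measurable_det fun a b => ?_)
  by_cases hab : a = j
  · simp [hab, measurable_const]
  · simpa [hab] using hA a b

end Measurable

end Matrix

section Expectation
variable {Ω n : Type*} [MeasurableSpace Ω] {μ : Measure Ω}

theorem Complex.integral_pos_of_forall_pos [NeZero μ] {f : Ω → ℂ} (hf : Integrable f μ)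
    (hpos : ∀ ω, 0 < f ω) : 0 < ∫ ω, f ω ∂μ := by
  have hreal (ω : Ω) : ((f ω).re : ℂ) = f ω := Complex.ext rfl (Complex.lt_def.mp (hpos ω)).2
  have hre_pos (ω : Ω) : 0 < (f ω).re := (Complex.lt_def.mp (hpos ω)).1
  have hsupp : Function.support (fun ω => (f ω).re) = Set.univ :=
    Set.eq_univ_of_forall fun ω => (hre_pos ω).ne'
  have hint : ∫ ω, f ω ∂μ = ((∫ ω, (f ω).re ∂μ : ℝ) : ℂ) := by
    rw [← integral_complex_ofReal]
    exact integral_congr_ae (ae_of_all _ fun ω => (hreal ω).symm)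
  rw [hint, Complex.zero_lt_real,
    integral_pos_iff_support_of_nonneg (fun ω => (hre_pos ω).le) hf.re, hsupp]
  exact Measure.measure_univ_pos.mpr (NeZero.ne μ)

variable {M : Ω → Matrix n n ℂ}

theorem isHermitian_intMat (hM : ∀ ω, (M ω).IsHermitian) : (intMat μ M).IsHermitian := by
  ext i j
  simp only [conjTranspose_apply, intMat, of_apply, ← starRingEnd_apply, ← integral_conj]
  simp only [starRingEnd_apply, ← conjTranspose_apply, (hM _).eq]

theorem intMat_one_sub [DecidableEq n] [IsProbabilityMeasure μ]
    (hM : ∀ i j, Integrable (fun ω => M ω i j) μ) :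
    intMat μ (fun ω => 1 - M ω) = 1 - intMat μ M := by
  ext i j
  simp [intMat, integral_sub (integrable_const _) (hM i j)]

theorem integrable_apply_of_posSemidef [IsFiniteMeasure μ] [DecidableEq n]
    (hmeas : ∀ i j, Measurable fun ω => M ω i j) (hpsd : ∀ ω, (M ω).PosSemidef)
    (hle : ∀ ω, (1 - M ω).PosSemidef) (i j : n) : Integrable (fun ω => M ω i j) μ :=
  .of_bound (hmeas i j).aestronglyMeasurable 1
    (ae_of_all _ fun ω => (hpsd ω).norm_apply_le_one (hle ω) i j)

variable [Fintype n]

theorem integrable_star_dotProduct_mulVec (hM : ∀ i j, Integrable (fun ω => M ω i j) μ)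
    (x : n → ℂ) : Integrable (fun ω => star x ⬝ᵥ M ω *ᵥ x) μ := by
  simp only [dotProduct, mulVec]
  exact integrable_finsetSum _ fun i _ =>
    (integrable_finsetSum _ fun j _ => (hM i j).mul_const _).const_mul _

theorem star_dotProduct_intMat_mulVec (hM : ∀ i j, Integrable (fun ω => M ω i j) μ)
    (x : n → ℂ) : star x ⬝ᵥ intMat μ M *ᵥ x = ∫ ω, star x ⬝ᵥ M ω *ᵥ x ∂μ := by
  simp only [dotProduct, mulVec, intMat, of_apply]
  rw [integral_finsetSum _ fun i _ =>
    (integrable_finsetSum _ fun j _ => (hM i j).mul_const _).const_mul _]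
  refine Finset.sum_congr rfl fun i _ => ?_
  rw [integral_const_mul, integral_finsetSum _ fun j _ => (hM i j).mul_const _]
  simp only [integral_mul_const]

theorem posSemidef_intMat (hM : ∀ i j, Integrable (fun ω => M ω i j) μ)
    (hpsd : ∀ ω, (M ω).PosSemidef) : (intMat μ M).PosSemidef :=
  .of_dotProduct_mulVec_nonneg (isHermitian_intMat fun ω => (hpsd ω).isHermitian) fun x => by
    rw [star_dotProduct_intMat_mulVec hM]
    exact integral_nonneg fun ω => (hpsd ω).dotProduct_mulVec_nonneg x

theorem posDef_intMat [NeZero μ] (hM : ∀ i j, Integrable (fun ω => M ω i j) μ)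
    (hpd : ∀ ω, (M ω).PosDef) : (intMat μ M).PosDef :=
  .of_dotProduct_mulVec_pos (isHermitian_intMat fun ω => (hpd ω).isHermitian) fun x hx => by
    rw [star_dotProduct_intMat_mulVec hM]
    exact Complex.integral_pos_of_forall_pos (integrable_star_dotProduct_mulVec hM x)
      fun ω => (hpd ω).dotProduct_mulVec_pos hx

end Expectation

section Mrand
variable {Ω : Type*} {K N : ℕ} {w : Fin K → ℝ}

theorem conjTranspose_sqrtDiag : (sqrtDiag w)ᴴ = sqrtDiag w := by
  simp [sqrtDiag, diagonal_conjTranspose]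

theorem sqrtDiag_mul_sqrtDiag (hw : ∀ i, 0 ≤ w i) : sqrtDiag w * sqrtDiag w = diagC w := by
  simp only [sqrtDiag, diagC, diagonal_mul_diagonal, ← Complex.ofReal_mul,
    Real.mul_self_sqrt (hw _)]

theorem Mrand_eq_mul_inv_mul_conjTranspose (hw : ∀ i, 0 ≤ w i) (P : ℝ)
    (Hhat : Ω → Matrix (Fin K) (Fin N) ℂ) (Ψ : Ω → Matrix (Fin N) (Fin N) ℂ) (ω : Ω) :
    Mrand w P Hhat Ψ ω = (sqrtDiag w * Hhat ω) *
      ((sqrtDiag w * Hhat ω)ᴴ * (sqrtDiag w * Hhat ω) + (Ψ ω + (P⁻¹ : ℂ) • 1))⁻¹ *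
      (sqrtDiag w * Hhat ω)ᴴ := by
  simp only [Mrand, conjTranspose_mul, conjTranspose_sqrtDiag, ← sqrtDiag_mul_sqrtDiag hw,
    Matrix.mul_assoc, add_assoc]

theorem measurable_Mrand_apply [MeasurableSpace Ω] (P : ℝ)
    {Hhat : Ω → Matrix (Fin K) (Fin N) ℂ} (hH : ∀ i j, Measurable fun ω => Hhat ω i j)
    {Ψ : Ω → Matrix (Fin N) (Fin N) ℂ} (hΨ : ∀ i j, Measurable fun ω => Ψ ω i j) (i j : Fin K) :
    Measurable fun ω => Mrand w P Hhat Ψ ω i j := by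
  have hconst {a b : ℕ} (A : Matrix (Fin a) (Fin b) ℂ) : ∀ i j, Measurable fun _ : Ω => A i j :=
    fun _ _ => measurable_const
  have hHt := measurable_conjTranspose_apply hH
  have hG : ∀ i j, Measurable fun ω =>
      ((Hhat ω)ᴴ * diagC w * Hhat ω + Ψ ω + (P⁻¹ : ℂ) • (1 : Matrix (Fin N) (Fin N) ℂ)) i j :=
    fun i j =>
    ((measurable_mul_apply (measurable_mul_apply hHt (hconst _)) hH i j).add
      (hΨ i j)).add measurable_const
  exact measurable_mul_apply (measurable_mul_apply
    (measurable_mul_apply (measurable_mul_apply (hconst _) hH) (measurable_inv_apply hG))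
    hHt) (hconst _) i j

end Mrand

/-- For `Π = E[M]` with
`M = W^{1/2} Ĥ (Ĥᴴ W Ĥ + Ψ + P⁻¹ I)⁻¹ Ĥᴴ W^{1/2}` (`W` PSD diagonal, `Ψ` random PSD,
`P > 0`), `Π` is Hermitian, positive semidefinite, and `I − Π` is positive definite. -/
theorem statement15
    {Ω : Type*} [mΩ : MeasurableSpace Ω] (μ : Measure Ω) [IsProbabilityMeasure μ]
    {K N : ℕ} (w : Fin K → ℝ) (hw0 : ∀ i, 0 ≤ w i) (P : ℝ) (hP : 0 < P)
    (Hhat : Ω → Matrix (Fin K) (Fin N) ℂ)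
    (hHmeas : ∀ i j, Measurable fun ω => Hhat ω i j)
    (Ψ : Ω → Matrix (Fin N) (Fin N) ℂ)
    (hΨmeas : ∀ i j, Measurable fun ω => Ψ ω i j)
    (hΨ : ∀ ω, (Ψ ω).PosSemidef) :
    (intMat μ (Mrand w P Hhat Ψ)).IsHermitian ∧
    (intMat μ (Mrand w P Hhat Ψ)).PosSemidef ∧
    ((1 : Matrix (Fin K) (Fin K) ℂ) - intMat μ (Mrand w P Hhat Ψ)).PosDef := by
  have hS (ω : Ω) : (Ψ ω + (P⁻¹ : ℂ) • 1).PosDef :=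
    PosDef.posSemidef_add (hΨ ω) (PosDef.one.smul (by exact_mod_cast inv_pos.mpr hP))
  have hpsd (ω : Ω) : (Mrand w P Hhat Ψ ω).PosSemidef := by
    rw [Mrand_eq_mul_inv_mul_conjTranspose hw0]
    exact posSemidef_mul_inv_mul_conjTranspose _ (hS ω)
  have hpd (ω : Ω) : (1 - Mrand w P Hhat Ψ ω).PosDef := by
    rw [Mrand_eq_mul_inv_mul_conjTranspose hw0]
    exact posDef_one_sub_mul_inv_mul_conjTranspose _ (hS ω)
  have hint := integrable_apply_of_posSemidef (μ := μ)
    (measurable_Mrand_apply P hHmeas hΨmeas) hpsd fun ω => (hpd ω).posSemidef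
  have hmean := posSemidef_intMat hint hpsd
  refine ⟨hmean.isHermitian, hmean, ?_⟩
  rw [← intMat_one_sub hint]
  exact posDef_intMat (fun i j => (integrable_const _).sub (hint i j)) hpd
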